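/- The function V̂₂ satisfies the Hamilton–Jacobi–Bellman equation of the problem with control set A = [−1,1]: for every x in (−1,1) with x ≠ 0, the supremum over a ∈ [−1,1] of (a²/2)·V̂₂''(x) − (4a + 9/2)·V̂₂(x) minus f(x) equals 0, with the supremum attained at a = sgn(x); moreover the boundary conditions V̂₂(1) = −sinh(2) and V̂₂(−1) = 2·sinh(1) hold. In particular, a Markov policy of the form π(x) = sgn(x) attains the HJB supremum even though the control set is the uncountable interval [−1,1]. -/

import Mathlib

/-- The candidate value function of the infinite-horizon control problem with
control set `A = [-1, 1]`. -/
noncomputable def Vhat2 (x : ℝ) : ℝ :=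
  if 0 ≤ x then -Real.sinh (2 * x) else -2 * Real.sinh x

/-- The running cost `f(x) = (13/2) sinh(2 max{x,0})`. -/
noncomputable def runningCost (x : ℝ) : ℝ := 13 / 2 * Real.sinh (2 * max x 0)

/-!
Away from `0`, `V̂₂` is locally `-sinh (2x)` or `-2 sinh x`, so `V̂₂'' = 4 V̂₂` for `x > 0` and
`V̂₂'' = V̂₂` for `x < 0`. The HJB Hamiltonian `a ↦ (a²/2) V̂₂'' - (4a + 9/2) V̂₂` is then
`-V̂₂ (9/2 + 4a - 2a²)` for `x > 0`, increasing on `[-1, 1]` since `-V̂₂ > 0`, and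
`V̂₂ (a²/2 - 4a - 9/2)` for `x < 0`, decreasing on `[-1, 1]` since `V̂₂ > 0`; its maxima at
`a = 1` and `a = -1` are `-(13/2) V̂₂ = f` and `0 = f` respectively.
-/

open Real Set Filter Topology

lemma hasDerivAt_const_mul_sinh_mul (k c y : ℝ) :
    HasDerivAt (fun y => k * sinh (c * y)) (k * c * cosh (c * y)) y := by
  have h := ((hasDerivAt_sinh (c * y)).comp y ((hasDerivAt_id y).const_mul c)).const_mul k
  exact h.congr_deriv (by simp only [mul_one]; ring)

lemma hasDerivAt_const_mul_cosh_mul (k c y : ℝ) :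
    HasDerivAt (fun y => k * cosh (c * y)) (k * c * sinh (c * y)) y := by
  have h := ((hasDerivAt_cosh (c * y)).comp y ((hasDerivAt_id y).const_mul c)).const_mul k
  exact h.congr_deriv (by simp only [mul_one]; ring)

lemma deriv_deriv_const_mul_sinh_mul (k c x : ℝ) :
    deriv (deriv fun y => k * sinh (c * y)) x = c ^ 2 * (k * sinh (c * x)) := by
  have hderiv : deriv (fun y => k * sinh (c * y)) = fun y => k * c * cosh (c * y) :=
    funext fun y => (hasDerivAt_const_mul_sinh_mul k c y).deriv
  rw [hderiv, (hasDerivAt_const_mul_cosh_mul (k * c) c x).deriv]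
  ring

lemma Vhat2_eventuallyEq_of_pos {x : ℝ} (hx : 0 < x) :
    Vhat2 =ᶠ[𝓝 x] fun y => -1 * sinh (2 * y) := by
  filter_upwards [Ioi_mem_nhds hx] with y hy
  simp [Vhat2, le_of_lt (mem_Ioi.mp hy)]

lemma Vhat2_eventuallyEq_of_neg {x : ℝ} (hx : x < 0) :
    Vhat2 =ᶠ[𝓝 x] fun y => -2 * sinh (1 * y) := by
  filter_upwards [Iio_mem_nhds hx] with y hy
  simp [Vhat2, not_le.mpr (mem_Iio.mp hy)]

lemma deriv_deriv_Vhat2_of_pos {x : ℝ} (hx : 0 < x) : deriv (deriv Vhat2) x = 4 * Vhat2 x := by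
  rw [(Vhat2_eventuallyEq_of_pos hx).deriv.deriv_eq, deriv_deriv_const_mul_sinh_mul,
    (Vhat2_eventuallyEq_of_pos hx).eq_of_nhds]
  norm_num

lemma deriv_deriv_Vhat2_of_neg {x : ℝ} (hx : x < 0) : deriv (deriv Vhat2) x = Vhat2 x := by
  rw [(Vhat2_eventuallyEq_of_neg hx).deriv.deriv_eq, deriv_deriv_const_mul_sinh_mul,
    (Vhat2_eventuallyEq_of_neg hx).eq_of_nhds]
  norm_num

lemma Vhat2_neg_of_pos {x : ℝ} (hx : 0 < x) : Vhat2 x < 0 := by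
  simpa [Vhat2, hx.le] using sinh_pos_iff.mpr (by positivity : 0 < 2 * x)

lemma Vhat2_pos_of_neg {x : ℝ} (hx : x < 0) : 0 < Vhat2 x := by
  have hsinh : sinh x < 0 := sinh_neg_iff.mpr hx
  simp only [Vhat2, not_le.mpr hx, if_false]
  linarith

lemma runningCost_of_nonneg {x : ℝ} (hx : 0 ≤ x) : runningCost x = -(13 / 2) * Vhat2 x := by
  simp [runningCost, Vhat2, hx]

lemma runningCost_of_nonpos {x : ℝ} (hx : x ≤ 0) : runningCost x = 0 := by
  simp [runningCost, hx]

lemma isGreatest_image_of_le {α β : Type*} [LE β] {g : α → β} {s : Set α} {a₀ : α}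
    (ha₀ : a₀ ∈ s) (hle : ∀ a ∈ s, g a ≤ g a₀) : IsGreatest (g '' s) (g a₀) :=
  ⟨mem_image_of_mem g ha₀, forall_mem_image.2 hle⟩

lemma isGreatest_hamiltonian_of_neg {v : ℝ} (hv : v < 0) :
    IsGreatest ((fun a : ℝ => a ^ 2 / 2 * (4 * v) - (4 * a + 9 / 2) * v) '' Icc (-1) 1)
      (-(13 / 2) * v) := by
  convert isGreatest_image_of_le (g := fun a : ℝ => a ^ 2 / 2 * (4 * v) - (4 * a + 9 / 2) * v)
    (s := Icc (-1) 1) (right_mem_Icc.2 (by norm_num)) fun a _ => ?_ using 1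
  · ring
  · nlinarith [mul_nonneg (sq_nonneg (a - 1)) (neg_nonneg.2 hv.le)]

lemma isGreatest_hamiltonian_of_pos {v : ℝ} (hv : 0 < v) :
    IsGreatest ((fun a : ℝ => a ^ 2 / 2 * v - (4 * a + 9 / 2) * v) '' Icc (-1) 1) 0 := by
  convert isGreatest_image_of_le (g := fun a : ℝ => a ^ 2 / 2 * v - (4 * a + 9 / 2) * v)
    (s := Icc (-1) 1) (left_mem_Icc.2 (by norm_num)) fun a ha => ?_ using 1
  · ring
  · have ha₁ : 0 ≤ a + 1 := by linarith [ha.1]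
    have ha₉ : 0 ≤ 9 - a := by linarith [ha.2]
    nlinarith [mul_nonneg (mul_nonneg ha₁ ha₉) hv.le]

/-- `V̂₂` satisfies the HJB equation with control set `A = [-1,1]`: for every
`x ∈ (-1,1) \ {0}`, the supremum over `a ∈ [-1,1]` of
`(a²/2) V̂₂''(x) - (4a + 9/2) V̂₂(x)` minus `f(x)` equals `0`, with the supremum
attained at `a = sgn x`; moreover the boundary conditions hold. -/
theorem Vhat2_HJB :
    (∀ x ∈ Set.Ioo (-1 : ℝ) 1, x ≠ 0 →
      IsGreatest
        ((fun a : ℝ => a ^ 2 / 2 * deriv (deriv Vhat2) x - (4 * a + 9 / 2) * Vhat2 x) ''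
          Set.Icc (-1 : ℝ) 1) (runningCost x) ∧
      (Real.sign x) ^ 2 / 2 * deriv (deriv Vhat2) x - (4 * Real.sign x + 9 / 2) * Vhat2 x
        = runningCost x) ∧
    Vhat2 1 = -Real.sinh 2 ∧
    Vhat2 (-1) = 2 * Real.sinh 1 := by
  refine ⟨fun x _ hx0 => ?_, by norm_num [Vhat2], by norm_num [Vhat2, sinh_neg]⟩
  rcases hx0.lt_or_gt with hneg | hpos
  · rw [deriv_deriv_Vhat2_of_neg hneg, runningCost_of_nonpos hneg.le, Real.sign_of_neg hneg]
    exact ⟨isGreatest_hamiltonian_of_pos (Vhat2_pos_of_neg hneg), by ring⟩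
  · rw [deriv_deriv_Vhat2_of_pos hpos, runningCost_of_nonneg hpos.le, Real.sign_of_pos hpos]
    exact ⟨isGreatest_hamiltonian_of_neg (Vhat2_neg_of_pos hpos), by ring⟩
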